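/- In the three-agent, three-item instance with values v_{a,A}=1, v_{a,B}=2, v_{b,B}=2, v_{b,C}=1, v_{c,C}=1 (all other values 0), the Nash-social-welfare-maximizing doubly stochastic matrix assigns agent a to item A, agent b to item B, and agent c to item C, each with probability 1. -/

import Mathlib

/-- Doubly stochastic `n × n` matrix. -/
def IsDoublyStochastic {n : ℕ} (p : Matrix (Fin n) (Fin n) ℝ) : Prop :=
  (∀ i j, 0 ≤ p i j) ∧ (∀ i, ∑ j, p i j = 1) ∧ (∀ j, ∑ i, p i j = 1)

/-- The expected utility of agent `i` under `p` with values `v`. -/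
def utility {n : ℕ} (v p : Matrix (Fin n) (Fin n) ℝ) (i : Fin n) : ℝ :=
  ∑ j, v i j * p i j

/-- Values of the three-agent instance: `v_{a,A}=1, v_{a,B}=2, v_{b,B}=2, v_{b,C}=1,
v_{c,C}=1`, all other values `0` (agents `a,b,c` and items `A,B,C` are indexed `0,1,2`). -/
def vABC : Matrix (Fin 3) (Fin 3) ℝ :=
  !![1, 2, 0; 0, 2, 1; 0, 0, 1]

/-!
Let `u` be the utilities at a candidate optimum and let item prices `t` and agent prices `r`
satisfy `v i j ≤ (t j + r i) * u i` with `∑ t + ∑ r = n`. For any doubly stochastic `q`,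
pairing the inequality with `q` and using its row and column sums gives
`∑ i, utility v q i / u i ≤ n`, and AM-GM turns this into `∏ i, utility v q i ≤ ∏ i, u i`.
-/

open Finset

lemma Real.prod_le_one_of_sum_le_card {ι : Type*} [Fintype ι] {x : ι → ℝ}
    (hx : ∀ i, 0 ≤ x i) (hsum : ∑ i, x i ≤ Fintype.card ι) : ∏ i, x i ≤ 1 := by
  rcases isEmpty_or_nonempty ι with _ | _
  · simp
  set n := Fintype.card ι
  have hn : (n : ℝ) ≠ 0 := by positivity
  have amgm := Real.geom_mean_le_arith_mean_weighted univ (fun _ ↦ (n : ℝ)⁻¹) x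
    (fun _ _ ↦ by positivity) (by simp [n, hn]) (fun i _ ↦ hx i)
  have hroot : ∏ i, x i ^ (n : ℝ)⁻¹ ≤ 1 := by
    refine amgm.trans ?_
    rw [← mul_sum, inv_mul_le_iff₀ (by positivity), mul_one]
    exact hsum
  calc ∏ i, x i = (∏ i, x i ^ (n : ℝ)⁻¹) ^ n := by
        rw [← prod_pow]
        exact prod_congr rfl fun i _ ↦ (Real.rpow_inv_natCast_pow (hx i) (by positivity)).symm
    _ ≤ 1 := pow_le_one₀ (prod_nonneg fun i _ ↦ by have := hx i; positivity) hroot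

lemma isDoublyStochastic_one {n : ℕ} : IsDoublyStochastic (1 : Matrix (Fin n) (Fin n) ℝ) :=
  mem_doublyStochastic_iff_sum.1 (doublyStochastic ℝ (Fin n)).one_mem

lemma utility_one {n : ℕ} (v : Matrix (Fin n) (Fin n) ℝ) (i : Fin n) : utility v 1 i = v i i := by
  simp [utility, Matrix.one_apply]

lemma utility_nonneg {n : ℕ} {v q : Matrix (Fin n) (Fin n) ℝ} (hv : ∀ i j, 0 ≤ v i j)
    (hq : IsDoublyStochastic q) (i : Fin n) : 0 ≤ utility v q i :=
  sum_nonneg fun j _ ↦ mul_nonneg (hv i j) (hq.1 i j)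

section DualCertificate

variable {n : ℕ} {v q : Matrix (Fin n) (Fin n) ℝ} {u t r : Fin n → ℝ}

lemma sum_utility_div_le_of_dual (hu : ∀ i, 0 < u i) (hvtr : ∀ i j, v i j ≤ (t j + r i) * u i)
    (hq : IsDoublyStochastic q) : ∑ i, utility v q i / u i ≤ ∑ j, t j + ∑ i, r i := by
  obtain ⟨hq_nonneg, hq_row, hq_col⟩ := hq
  calc ∑ i, utility v q i / u i = ∑ i, ∑ j, v i j / u i * q i j := by
        simp only [utility, sum_div]
        exact sum_congr rfl fun i _ ↦ sum_congr rfl fun j _ ↦ by ring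
    _ ≤ ∑ i, ∑ j, (t j + r i) * q i j := by
        gcongr with i _ j _
        · exact hq_nonneg i j
        · exact (div_le_iff₀ (hu i)).2 (hvtr i j)
    _ = ∑ j, t j * ∑ i, q i j + ∑ i, r i * ∑ j, q i j := by
        simp only [add_mul, sum_add_distrib, mul_sum]
        rw [sum_comm]
    _ = ∑ j, t j + ∑ i, r i := by simp [hq_row, hq_col]

theorem prod_utility_le_of_dual (hv : ∀ i j, 0 ≤ v i j) (hu : ∀ i, 0 < u i)
    (hvtr : ∀ i j, v i j ≤ (t j + r i) * u i) (htr : ∑ j, t j + ∑ i, r i = n)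
    (hq : IsDoublyStochastic q) : ∏ i, utility v q i ≤ ∏ i, u i := by
  have hratio : ∏ i, utility v q i / u i ≤ 1 :=
    Real.prod_le_one_of_sum_le_card (fun i ↦ div_nonneg (utility_nonneg hv hq i) (hu i).le)
      (by simpa [htr] using sum_utility_div_le_of_dual hu hvtr hq)
  rwa [prod_div_distrib, div_le_one (prod_pos fun i _ ↦ hu i)] at hratio

end DualCertificate

lemma vABC_nonneg : ∀ i j, 0 ≤ vABC i j := by
  simp [Fin.forall_fin_succ, vABC]

lemma vABC_diag_pos : ∀ i, 0 < vABC i i := by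
  simp [Fin.forall_fin_succ, vABC]

lemma vABC_le_dual : ∀ i j, vABC i j ≤ (![0, 1, 1] j + ![1, 0, 0] i) * vABC i i := by
  norm_num [Fin.forall_fin_succ, vABC]

/-- In this instance, the assignment giving `a → A`, `b → B`, `c → C` each with
probability `1` (the identity matrix) maximizes Nash social welfare over
doubly stochastic matrices. -/
theorem nsw_max_three_agent_example (p : Matrix (Fin 3) (Fin 3) ℝ)
    (hp : p = fun i j => if i = j then (1 : ℝ) else 0) :
    IsDoublyStochastic p ∧
      ∀ q : Matrix (Fin 3) (Fin 3) ℝ, IsDoublyStochastic q →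
        ∏ i, utility vABC q i ≤ ∏ i, utility vABC p i := by
  obtain rfl : p = 1 := hp.trans (funext₂ fun _ _ ↦ Matrix.one_apply.symm)
  refine ⟨isDoublyStochastic_one, fun q hq ↦ ?_⟩
  simp only [utility_one]
  exact prod_utility_le_of_dual vABC_nonneg vABC_diag_pos vABC_le_dual
    (by norm_num [Fin.sum_univ_succ]) hq
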